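/- arXiv:1409.0163 — 3 statements merged into one kernel-verified Lean document; each statement's English description precedes it below -/
import Mathlib

section
/- Let n ≥ 1, k ≥ 2, r ≥ 2, and let Γ be a connected graph with r external vertices of degree ≥ 1, v internal vertices of degree ≥ 3, e edges, and first Betti number j ≥ 0. Then (n+k−1)e − (n+k)v ≥ n(r−1) + (n−1)j + (k−2)(r+j−1) + 1 > n(r−1) − 1. -/
/-!
Eliminating `e` by the Betti relation, the parameters `n` and `k` cancel: the degree of the form
exceeds the bound by exactly `r + 2j − 2 − v`, and the valence condition says precisely that this
is nonnegative.
-/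

theorem formDegree_sub_bound_eq (n k r v j : ℤ) :
    (n + k - 1) * (v + r + j - 1) - (n + k) * v
        - (n * (r - 1) + (n - 1) * j + (k - 2) * (r + j - 1) + 1)
      = r + 2 * j - 2 - v := by
  ring

theorem internal_le_of_betti_of_valence {r v e j : ℤ} (hbetti : e = v + r + j - 1)
    (hval : 3 * v + r ≤ 2 * e) : v ≤ r + 2 * j - 2 := by
  omega

theorem bound_excess_pos {n k r j : ℤ} (hn : 1 ≤ n) (hk : 2 ≤ k) (hr : 1 ≤ r) (hj : 0 ≤ j) :
    0 < (n - 1) * j + (k - 2) * (r + j - 1) + 2 := by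
  have hnj : 0 ≤ (n - 1) * j := mul_nonneg (by omega) hj
  have hkr : 0 ≤ (k - 2) * (r + j - 1) := mul_nonneg (by omega) (by omega)
  omega

theorem stmt2_general (n k r v e j : ℤ)
    (hn : 1 ≤ n) (hk : 2 ≤ k) (hr : 2 ≤ r) (hj : 0 ≤ j)
    (hbetti : e = v + r + j - 1)
    (hval : 3 * v + r ≤ 2 * e) :
    n * (r - 1) + (n - 1) * j + (k - 2) * (r + j - 1) + 1
        ≤ (n + k - 1) * e - (n + k) * v
      ∧ n * (r - 1) - 1
        < n * (r - 1) + (n - 1) * j + (k - 2) * (r + j - 1) + 1 := by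
  have hv_le := internal_le_of_betti_of_valence hbetti hval
  subst hbetti
  constructor
  · linarith [formDegree_sub_bound_eq n k r v j]
  · linarith [bound_excess_pos hn hk (by omega : 1 ≤ r) hj]

/-- for `n ≥ 1`, `k ≥ 2`, `r ≥ 2` and a connected graph with `v ≥ 0`
internal vertices, `e` edges and first Betti number `j ≥ 0` (so `e = v + r + j − 1`
and, by the valence conditions, `2e ≥ 3v + r`), the degree of the associated form
satisfies `(n+k−1)e − (n+k)v ≥ n(r−1) + (n−1)j + (k−2)(r+j−1) + 1 > n(r−1) − 1`. -/
theorem stmt2 (n k r v e j : ℤ)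
    (hn : 1 ≤ n) (hk : 2 ≤ k) (hr : 2 ≤ r) (hv : 0 ≤ v) (hj : 0 ≤ j)
    (hbetti : e = v + r + j - 1)
    (hval : 3 * v + r ≤ 2 * e) :
    n * (r - 1) + (n - 1) * j + (k - 2) * (r + j - 1) + 1
        ≤ (n + k - 1) * e - (n + k) * v
      ∧ n * (r - 1) - 1
        < n * (r - 1) + (n - 1) * j + (k - 2) * (r + j - 1) + 1 :=
  stmt2_general n k r v e j hn hk hr hj hbetti hval
end

section
/- For every integer n ≥ 1, every integer k ≥ 2 and every connected graph Γ with at least one edge (r ≥ 2 external vertices of degree ≥ 1, internal vertices of degree ≥ 3), the degree of the associated form, (n+k−1)e − (n+k)v, strictly exceeds n(r−1) − 1. Consequently no such graph contributes a nonzero form of degree ≤ dim FM_n(r). -/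
/-!
Eliminating `e` with the Betti relation, the degree of the form is `(n+k-1)(r+j-1) - v`, so the
claim becomes `v ≤ (k-1)(r-1) + (n+k-1)j`. The valence condition bounds the number of internal
vertices by `v ≤ r + 2j - 2`, which is smaller since `k - 1 ≥ 1` and `n + k - 1 ≥ 2`.
-/

theorem internal_vertices_le_of_valence {v r j e : ℤ} (hbetti : e = v + r + j - 1)
    (hval : 3 * v + r ≤ 2 * e) : v ≤ r + 2 * j - 2 := by
  subst hbetti
  linarith

theorem form_degree_eq_of_betti {n k r v e j : ℤ} (hbetti : e = v + r + j - 1) :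
    (n + k - 1) * e - (n + k) * v = (n + k - 1) * (r - 1) + (n + k - 1) * j - v := by
  subst hbetti
  ring

theorem stmt3_general (n k r v e j : ℤ)
    (hn : 1 ≤ n) (hk : 2 ≤ k) (hr : 2 ≤ r) (hj : 0 ≤ j)
    (hbetti : e = v + r + j - 1)
    (hval : 3 * v + r ≤ 2 * e) :
    n * (r - 1) - 1 < (n + k - 1) * e - (n + k) * v := by
  have hv := internal_vertices_le_of_valence hbetti hval
  have hext : r - 1 ≤ (k - 1) * (r - 1) := le_mul_of_one_le_left (by linarith) (by linarith)
  have hloops : 2 * j ≤ (n + k - 1) * j := mul_le_mul_of_nonneg_right (by linarith) hj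
  rw [form_degree_eq_of_betti hbetti]
  linarith

/-- for every `n ≥ 1`, `k ≥ 2` and every connected graph with at least
one edge (`e ≥ 1`), `r ≥ 2` external vertices of degree ≥ 1 and internal vertices of
degree ≥ 3 (so `e = v + r + j − 1` with `j ≥ 0` and `2e ≥ 3v + r`), the degree of the
associated form `(n+k−1)e − (n+k)v` strictly exceeds `n(r−1) − 1 = dim FM_n(r)`. -/
theorem stmt3 (n k r v e j : ℤ)
    (hn : 1 ≤ n) (hk : 2 ≤ k) (hr : 2 ≤ r) (hv : 0 ≤ v) (hj : 0 ≤ j)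
    (he : 1 ≤ e)
    (hbetti : e = v + r + j - 1)
    (hval : 3 * v + r ≤ 2 * e) :
    n * (r - 1) - 1 < (n + k - 1) * e - (n + k) * v :=
  stmt3_general n k r v e j hn hk hr hj hbetti hval
end

section
/- Consider the two-sided (half-infinite) edge-decoration complex D^{±} whose basis elements are strings of bivalent vertices each labeled e_+ or e_−, with differential splitting an e_+-vertex into two e_+-vertices and an e_−-vertex into two e_−-vertices (alternating sum over positions). If the two endpoints of the edge carry opposite labels (one e_+, one e_−), then the complex D^{+−} is acyclic; if the endpoints carry the same label, the homology is one-dimensional, represented by the direct edge (empty string). -/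
/-- Duplicate the `i`-th vertex of the chain `a, w₀, …, w_{len−1}, b` inside the
interior word `w`: insert a copy of that label at position `i` (for `i = 0` this is
the endpoint label `a`, for `i = len+1` the endpoint label `b`). -/
def dupAt (a b : Bool) (w : List Bool) (i : ℕ) : List Bool :=
  w.take i ++ [(a :: w).getD i b] ++ w.drop i

/-- The differential of the edge-decoration complex between endpoints labeled `a` and
`b`: the alternating sum over all vertices (including the endpoints) of splitting that
vertex into two vertices with the same label. -/
noncomputable def edgeDiff (a b : Bool) :
    (List Bool →₀ ℝ) →ₗ[ℝ] (List Bool →₀ ℝ) :=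
  Finsupp.lift (List Bool →₀ ℝ) ℝ (List Bool)
    (fun w => ∑ i ∈ Finset.range (w.length + 2),
      ((-1 : ℝ) ^ i) • Finsupp.single (dupAt a b w i) (1 : ℝ))

/-! Let `h` delete a leading vertex labelled `a` (the left endpoint's label). Since
`d_{a,b} (x :: w) = (a :: x :: w) - x :: d_{x,b} w`, the map `h d + d h` is the identity on
every nonempty word, while on the empty word `h d [] = [] - [b = a] []` and `h [] = 0`.
So for `a ≠ b` the homotopy `h` contracts the complex, and for `a = b` every cycle is
homologous to a multiple of the empty word, and no nonzero multiple of it is a boundary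
because `d` never produces the empty word. -/

open Finsupp

lemma dupAt_zero (a b : Bool) (w : List Bool) : dupAt a b w 0 = a :: w := by
  simp [dupAt]

lemma dupAt_cons_succ (a b x : Bool) (w : List Bool) (i : ℕ) :
    dupAt a b (x :: w) (i + 1) = x :: dupAt x b w i := by
  simp [dupAt]

lemma dupAt_nil_one (a b : Bool) : dupAt a b [] 1 = [b] := by
  simp [dupAt]

lemma dupAt_ne_nil (a b : Bool) (w : List Bool) (i : ℕ) : dupAt a b w i ≠ [] := by
  simp [dupAt]

lemma edgeDiff_single (a b : Bool) (w : List Bool) :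
    edgeDiff a b (single w 1) =
      ∑ i ∈ Finset.range (w.length + 2), ((-1 : ℝ) ^ i) • single (dupAt a b w i) 1 := by
  simp [edgeDiff, lift_apply, sum_single_index]

lemma edgeDiff_single_nil (a b : Bool) :
    edgeDiff a b (single [] 1) = single [a] 1 - single [b] 1 := by
  simp [edgeDiff_single, Finset.sum_range_succ, dupAt_zero, dupAt_nil_one, sub_eq_add_neg]

lemma edgeDiff_single_cons (a b x : Bool) (w : List Bool) :
    edgeDiff a b (single (x :: w) 1) =
      single (a :: x :: w) 1 - mapDomain (List.cons x) (edgeDiff x b (single w 1)) := by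
  rw [edgeDiff_single, edgeDiff_single, List.length_cons, Finset.sum_range_succ',
    mapDomain_finsetSum]
  simp only [dupAt_zero, dupAt_cons_succ, pow_succ, mul_neg_one, neg_smul, pow_zero, one_smul,
    Finset.sum_neg_distrib, mapDomain_smul, mapDomain_single]
  abel

lemma edgeDiff_apply_nil (a b : Bool) (x : List Bool →₀ ℝ) : edgeDiff a b x [] = 0 := by
  induction x using Finsupp.induction_linear with
  | zero => simp
  | add x y hx hy => simp [hx, hy]
  | single w r =>
    rw [← smul_single_one, map_smul, Finsupp.smul_apply, edgeDiff_single]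
    simp [dupAt_ne_nil]

noncomputable def eraseHead (a : Bool) : (List Bool →₀ ℝ) →ₗ[ℝ] (List Bool →₀ ℝ) :=
  lcomapDomain (List.cons a) List.cons_injective

@[simp]
lemma eraseHead_apply (a : Bool) (x : List Bool →₀ ℝ) (w : List Bool) :
    eraseHead a x w = x (a :: w) := rfl

lemma eraseHead_single_nil (a : Bool) (r : ℝ) : eraseHead a (single [] r) = 0 := by
  ext w; simp

lemma eraseHead_mapDomain_cons (a x : Bool) (y : List Bool →₀ ℝ) :
    eraseHead a (mapDomain (List.cons x) y) = if x = a then y else 0 := by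
  ext w
  split_ifs with hx
  · subst hx; simp [mapDomain_apply List.cons_injective]
  · exact mapDomain_of_notMem_range _ _ (by simpa using hx)

lemma eraseHead_single_cons (a x : Bool) (w : List Bool) (r : ℝ) :
    eraseHead a (single (x :: w) r) = if x = a then single w r else 0 := by
  rw [← mapDomain_single, eraseHead_mapDomain_cons]

lemma eraseHead_edgeDiff_add_edgeDiff_eraseHead_single (a b : Bool) (w : List Bool) :
    eraseHead a (edgeDiff a b (single w 1)) + edgeDiff a b (eraseHead a (single w 1)) =
      single w 1 - if w = [] ∧ a = b then single [] 1 else 0 := by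
  cases w with
  | nil =>
    rw [edgeDiff_single_nil, eraseHead_single_nil, map_sub, eraseHead_single_cons,
      eraseHead_single_cons]
    by_cases hab : a = b
    · simp [hab]
    · simp [hab, Ne.symm hab]
  | cons x w =>
    rw [edgeDiff_single_cons, map_sub, eraseHead_single_cons, eraseHead_single_cons,
      eraseHead_mapDomain_cons]
    by_cases hx : x = a
    · subst hx; simp
    · simp [hx]

theorem eraseHead_edgeDiff_add_edgeDiff_eraseHead (a b : Bool) (x : List Bool →₀ ℝ) :
    eraseHead a (edgeDiff a b x) + edgeDiff a b (eraseHead a x) =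
      x - if a = b then single [] (x []) else 0 := by
  induction x using Finsupp.induction_linear with
  | zero => simp
  | add x y hx hy =>
    simp only [map_add, add_add_add_comm, hx, hy, Finsupp.add_apply, single_add]
    split_ifs <;> abel
  | single w r =>
    rw [← smul_single_one]
    simp only [map_smul, ← smul_add, eraseHead_edgeDiff_add_edgeDiff_eraseHead_single]
    by_cases hab : a = b
    · cases w <;> simp [hab, smul_single]
    · simp [hab]

/-- if the two endpoints of the edge carry opposite labels, the
edge-decoration complex is acyclic; if they carry the same label, its homology is
one-dimensional, represented by the direct edge (the empty word). -/
theorem stmt8 (a b : Bool) :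
    (a ≠ b → ∀ x, edgeDiff a b x = 0 → ∃ y, x = edgeDiff a b y)
    ∧ (a = b →
        (∀ x, edgeDiff a b x = 0 →
          ∃ (c : ℝ) (y : List Bool →₀ ℝ),
            x = c • Finsupp.single ([] : List Bool) (1 : ℝ) + edgeDiff a b y)
        ∧ (∀ (c : ℝ) (y : List Bool →₀ ℝ),
            c • Finsupp.single ([] : List Bool) (1 : ℝ) = edgeDiff a b y → c = 0)) := by
  have homotopy := eraseHead_edgeDiff_add_edgeDiff_eraseHead a b
  refine ⟨fun hab x hx => ⟨eraseHead a x, ?_⟩, fun hab => ⟨fun x hx => ?_, fun c y hcy => ?_⟩⟩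
  · simpa [hx, hab] using (homotopy x).symm
  · refine ⟨x [], eraseHead a x, ?_⟩
    have hx' := homotopy x
    rw [hx, map_zero, zero_add, if_pos hab, ← smul_single_one] at hx'
    rw [hx', add_sub_cancel]
  · simpa [edgeDiff_apply_nil] using congrArg (· []) hcy
end
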